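/- arXiv:1007.2927 — 2 statements merged into one kernel-verified Lean document; each statement's English description precedes it below -/
import Mathlib

section
/- Let A be a C*-algebra, X a locally compact Hausdorff space, a a positive element of C₀(X,A), and b a positive element of A. Then the set {x ∈ X : (there exists ε > 0 such that b is Cuntz subequivalent to (a(x) − ε)₊ in A) and a(x) is not Cuntz subequivalent to b in A} is open in X. (In Cuntz semigroup language this set is {x ∈ X : [b] ≪ [a(x)] and [b] ≠ [a(x)]}.) -/
/-!
If `b ≼ (a x₀ - ε)₊` and `‖a x - a x₀‖ ≤ ε / 2`, then in the unitization
`a x₀ ≤ a x + ε / 2 ≤ (a x - ε / 2)₊ + ε`. An operator inequality `p ≤ B + ε` forces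
`(p - ε)₊ ≼ B`: conjugating by a function `m` of `p` supported where `p > ε + γ` gives
`(p - ε - γ)₊ ≤ m B m`, and `c ≤ d` implies `c ≼ d` by approximating the unit of the hereditary
subalgebra generated by `d`. So `b ≼ (a x - ε / 2)₊` near `x₀`. The condition `a x ⋠ b` is open
because `{c | c ≼ b}` is the closure of `{s* b s}`.
-/

open scoped ZeroAtInfty

/-- `(a - ε)₊`: the result of applying `t ↦ max (t - ε) 0` to `a` by the (non-unital)
continuous functional calculus. -/
noncomputable def cutdown {A : Type*} [NonUnitalCStarAlgebra A] (ε : ℝ) (a : A) : A :=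
  cfcₙ (fun t : ℝ => max (t - ε) 0) a

/-- Cuntz subequivalence of positive elements in a C*-algebra. -/
def CuntzLE {A : Type*} [NonUnitalCStarAlgebra A] (c d : A) : Prop :=
  ∀ δ > (0 : ℝ), ∃ s : A, ‖c - star s * d * s‖ < δ

lemma exists_mul_sub_mul_eq_max_sub {ε γ : ℝ} (hε : 0 ≤ ε) (hγ : 0 < γ) :
    ∃ m : ℝ → ℝ, Continuous m ∧ m 0 = 0 ∧ ∀ t, m t * (t - ε) * m t = max (t - (ε + γ)) 0 := by
  refine ⟨fun t => √(max (t - (ε + γ)) 0 / max (t - ε) γ),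
    by fun_prop (disch := intro; positivity), ?_, fun t => ?_⟩
  · simp only [zero_sub, max_eq_right (by linarith : -(ε + γ) ≤ 0), zero_div, Real.sqrt_zero]
  rw [mul_comm, ← mul_assoc, Real.mul_self_sqrt (by positivity)]
  rcases le_total t (ε + γ) with ht | ht
  · simp [max_eq_right (sub_nonpos.2 ht)]
  · rw [max_eq_left (by linarith : γ ≤ t - ε), max_eq_left (sub_nonneg.2 ht)]
    field_simp [(by linarith : t - ε ≠ 0)]

open Unitization

section NonUnital

variable {A : Type*} [NonUnitalCStarAlgebra A]

lemma cuntzLE_iff_mem_closure {c d : A} :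
    CuntzLE c d ↔ c ∈ closure (Set.range fun s => star s * d * s) := by
  simp [CuntzLE, Metric.mem_closure_iff, dist_eq_norm]

lemma isClosed_setOf_cuntzLE (d : A) : IsClosed {c : A | CuntzLE c d} := by
  simp only [cuntzLE_iff_mem_closure, Set.ofPred_mem_eq, isClosed_closure]

lemma cuntzLE_star_mul_mul (d m : A) : CuntzLE (star m * d * m) d :=
  cuntzLE_iff_mem_closure.2 <| subset_closure ⟨m, rfl⟩

lemma CuntzLE.trans {b c d : A} (hbc : CuntzLE b c) (hcd : CuntzLE c d) : CuntzLE b d := by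
  rw [cuntzLE_iff_mem_closure] at *
  refine closure_minimal (Set.range_subset_iff.2 fun s => ?_) isClosed_closure hbc
  refine map_mem_closure (f := fun x => star s * x * s) (by fun_prop) hcd ?_
  rintro _ ⟨t, rfl⟩
  exact ⟨t * s, by simp only [star_mul, mul_assoc]⟩

lemma inr_cutdown {ε : ℝ} (hε : 0 ≤ ε) (p : A) :
    ((cutdown ε p : A) : Unitization ℂ A) = cfc (fun t => max (t - ε) 0) (p : Unitization ℂ A) :=
  real_cfcₙ_eq_cfc_inr p _ (by simpa using hε)

lemma norm_cutdown_sub_cutdown_le {ε γ : ℝ} (hε : 0 ≤ ε) (hγ : 0 ≤ γ) (p : A) :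
    ‖cutdown ε p - cutdown (ε + γ) p‖ ≤ γ := by
  rw [cutdown, cutdown, ← cfcₙ_sub (R := ℝ) _ _ p (by fun_prop) (by simp [hε])
    (by fun_prop) (by simp; linarith)]
  refine norm_cfcₙ_le fun t _ => ?_
  calc ‖max (t - ε) 0 - max (t - (ε + γ)) 0‖ ≤ |(t - ε) - (t - (ε + γ))| :=
        abs_max_sub_max_le_abs _ _ _
    _ = γ := by rw [sub_sub_sub_cancel_left, add_sub_cancel_left, abs_of_nonneg hγ]

end NonUnital

section Unital

variable {M : Type*} [CStarAlgebra M]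

lemma cfc_mul_cfc_mul_cfc (f g : ℝ → ℝ) (x : M) (hf : ContinuousOn f (spectrum ℝ x))
    (hg : ContinuousOn g (spectrum ℝ x)) :
    cfc f x * cfc g x * cfc f x = cfc (fun t => f t * g t * f t) x := by
  rw [← cfc_mul f g x hf hg, ← cfc_mul (fun t => f t * g t) f x (hf.mul hg) hf]

variable [PartialOrder M] [StarOrderedRing M]

lemma le_add_algebraMap_of_norm_sub_le {x y : M} {η : ℝ} (hxy : IsSelfAdjoint (x - y))
    (h : ‖x - y‖ ≤ η) : x ≤ y + algebraMap ℝ M η := by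
  rw [← sub_le_iff_le_add']
  exact hxy.le_algebraMap_norm_self.trans (algebraMap_mono M h)

lemma le_cfc_max_sub_add_algebraMap {y : M} (hy : IsSelfAdjoint y) (η : ℝ) :
    y ≤ cfc (fun t => max (t - η) 0) y + algebraMap ℝ M η := by
  calc y = cfc id y := (cfc_id ℝ y).symm
    _ ≤ cfc (fun t => max (t - η) 0 + η) y :=
        cfc_mono fun t _ => by simp only [id]; linarith [le_max_left (t - η) 0]
    _ = _ := cfc_add_const η _ y

-- `e = (d + ν)^(-1/2)` and `w = (ν / (d + ν))^(1/2)`, an approximate unit of the hereditary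
-- subalgebra generated by `d`.
lemma exists_mul_mul_add_mul_eq_one {d : M} (hd : 0 ≤ d) {ν : ℝ} (hν : 0 < ν) :
    ∃ e w : M, IsSelfAdjoint e ∧ IsSelfAdjoint w ∧ e * d * e + w * w = 1 ∧
      ‖w * d * w‖ ≤ ν := by
  set g : ℝ → ℝ := fun t => (√(max t 0 + ν))⁻¹
  set k : ℝ → ℝ := fun t => √(ν / (max t 0 + ν))
  have hg : Continuous g := by fun_prop (disch := intro; positivity)
  have hk : Continuous k := by fun_prop (disch := intro; positivity)
  refine ⟨cfc g d, cfc k d, cfc_predicate g d, cfc_predicate k d, ?_, ?_⟩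
  · nth_rewrite 2 [← cfc_id ℝ d]
    rw [cfc_mul_cfc_mul_cfc g id d hg.continuousOn continuousOn_id, ← cfc_mul k k d,
      ← cfc_add (a := d) _ _ (by fun_prop) (by fun_prop), ← cfc_const_one ℝ d]
    refine cfc_congr fun t ht => ?_
    have ht : 0 ≤ t := spectrum_nonneg_of_nonneg hd ht
    have htν : 0 < t + ν := by positivity
    simp only [g, k, max_eq_left ht, id]
    rw [Real.mul_self_sqrt (by positivity), mul_comm _ t, mul_assoc, ← mul_inv,
      Real.mul_self_sqrt htν.le]
    field_simp
  · nth_rewrite 2 [← cfc_id ℝ d]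
    rw [cfc_mul_cfc_mul_cfc k id d hk.continuousOn continuousOn_id]
    refine norm_cfc_le hν.le fun t ht => ?_
    have ht : 0 ≤ t := spectrum_nonneg_of_nonneg hd ht
    have htν : 0 < t + ν := by positivity
    simp only [k, max_eq_left ht, id]
    rw [mul_comm, ← mul_assoc, Real.mul_self_sqrt (by positivity), Real.norm_eq_abs,
      abs_of_nonneg (by positivity), div_mul_eq_mul_div, div_le_iff₀ htν]
    nlinarith

lemma norm_mul_self_sub_star_mul_mul_le {d e w r : M} (he : IsSelfAdjoint e)
    (hw : IsSelfAdjoint w) (hr : IsSelfAdjoint r) (hedw : e * d * e + w * w = 1)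
    (hrd : r * r ≤ d) : ‖r * r - star (e * r) * d * (e * r)‖ ≤ ‖w * d * w‖ := by
  have hconj : r * r - star (e * r) * d * (e * r) = star (w * r) * (w * r) := by
    have hww : w * w = 1 - e * d * e := eq_sub_of_add_eq' hedw
    rw [star_mul, star_mul, he.star_eq, hw.star_eq, hr.star_eq]
    calc r * r - r * e * d * (e * r) = r * (1 - e * d * e) * r := by noncomm_ring
      _ = r * w * (w * r) := by rw [← hww]; noncomm_ring
  rw [hconj, CStarRing.norm_star_mul_self, ← CStarRing.norm_self_mul_star, star_mul,
    hw.star_eq, hr.star_eq, ← mul_assoc, mul_assoc w]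
  have hrr : 0 ≤ r * r := by simpa only [hr.star_eq] using star_mul_self_nonneg r
  have hwrrw : 0 ≤ w * (r * r) * w := by
    simpa only [hw.star_eq] using star_left_conjugate_nonneg hrr w
  exact CStarAlgebra.norm_le_norm_of_nonneg_of_le hwrrw (hw.conjugate_le_conjugate hrd)

end Unital

section NonUnitalOrdered

variable {A : Type*} [NonUnitalCStarAlgebra A] [PartialOrder A] [StarOrderedRing A]

lemma cutdown_nonneg (ε : ℝ) (p : A) : 0 ≤ cutdown ε p :=
  cfcₙ_nonneg fun _ _ => le_max_right _ _

lemma CuntzLE.of_le {c d : A} (hc : 0 ≤ c) (hcd : c ≤ d) : CuntzLE c d := by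
  intro δ hδ
  have hd : 0 ≤ d := hc.trans hcd
  obtain ⟨e, w, he, hw, hedw, hwdw⟩ :=
    exists_mul_mul_add_mul_eq_one (inr_nonneg_iff.2 hd) (half_pos hδ)
  set r := CFC.sqrt c
  have hr : IsSelfAdjoint r := .of_nonneg (CFC.sqrt_nonneg c)
  have hrr : r * r = c := CFC.sqrt_mul_sqrt_self c hc
  set s : A := e.fst • r + e.snd * r
  have hs : e * (r : Unitization ℂ A) = s := by ext <;> simp [s]
  have hrd : (r : Unitization ℂ A) * r ≤ d := by
    rwa [← inr_mul, hrr, inr_le_iff c d (.of_nonneg hc) (.of_nonneg hd)]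
  have := norm_mul_self_sub_star_mul_mul_le he hw (isSelfAdjoint_inr.2 hr) hedw hrd
  refine ⟨s, ?_⟩
  rw [hs, ← inr_mul, hrr, ← inr_star, ← inr_mul, ← inr_mul, ← inr_sub, norm_inr] at this
  linarith

lemma cutdown_cuntzLE_of_le_add {p B : A} (hp : IsSelfAdjoint p) (hB : IsSelfAdjoint B)
    {ε : ℝ} (hε : 0 ≤ ε) (h : (p : Unitization ℂ A) ≤ B + algebraMap ℝ _ ε) :
    CuntzLE (cutdown ε p) B := by
  have hγ : ∀ γ > 0, CuntzLE (cutdown (ε + γ) p) B := by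
    intro γ hγ
    obtain ⟨m, hm, hm0, hmt⟩ := exists_mul_sub_mul_eq_max_sub hε hγ
    set P : Unitization ℂ A := (p : Unitization ℂ A)
    have hmA : IsSelfAdjoint (cfcₙ m p) := cfcₙ_predicate m p
    have hle : cutdown (ε + γ) p ≤ cfcₙ m p * B * cfcₙ m p := by
      rw [← inr_le_iff _ _ (.of_nonneg (cutdown_nonneg _ _))
        (by simpa only [hmA.star_eq] using hB.conjugate (cfcₙ m p)),
        inr_mul, inr_mul, inr_cutdown (by positivity), real_cfcₙ_eq_cfc_inr p m hm0]
      calc cfc (fun t => max (t - (ε + γ)) 0) P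
          = cfc m P * cfc (fun t => t - ε) P * cfc m P := by
            rw [cfc_mul_cfc_mul_cfc m _ P hm.continuousOn (by fun_prop)]
            exact cfc_congr fun t _ => (hmt t).symm
        _ = cfc m P * (P - algebraMap ℝ _ ε) * cfc m P := by
            rw [cfc_sub (fun t => t) (fun _ => ε), cfc_id' ℝ P, cfc_const ε P]
        _ ≤ cfc m P * B * cfc m P :=
            (cfc_predicate m P).conjugate_le_conjugate (sub_le_iff_le_add.2 h)
    have hconj : CuntzLE (cfcₙ m p * B * cfcₙ m p) B := by
      simpa only [hmA.star_eq] using cuntzLE_star_mul_mul B (cfcₙ m p)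
    exact (CuntzLE.of_le (cutdown_nonneg _ _) hle).trans hconj
  refine (isClosed_setOf_cuntzLE B).closure_subset <| Metric.mem_closure_iff.2 fun δ hδ =>
    ⟨cutdown (ε + δ / 2) p, hγ _ (half_pos hδ), ?_⟩
  rw [dist_eq_norm]
  linarith [norm_cutdown_sub_cutdown_le hε (half_pos hδ).le p]

lemma cutdown_cuntzLE_cutdown_of_norm_sub_le {p q : A} (hp : IsSelfAdjoint p)
    (hq : IsSelfAdjoint q) {η : ℝ} (hη : 0 ≤ η) (h : ‖p - q‖ ≤ η) :
    CuntzLE (cutdown (2 * η) p) (cutdown η q) := by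
  refine cutdown_cuntzLE_of_le_add hp (.of_nonneg (cutdown_nonneg η q)) (by positivity) ?_
  calc (p : Unitization ℂ A) ≤ q + algebraMap ℝ _ η :=
        le_add_algebraMap_of_norm_sub_le
          (by rw [← inr_sub ℂ]; exact isSelfAdjoint_inr.2 (hp.sub hq))
          (by rwa [← inr_sub ℂ, norm_inr])
    _ ≤ (cutdown η q + algebraMap ℝ _ η) + algebraMap ℝ _ η := by
        rw [inr_cutdown hη]
        gcongr
        exact le_cfc_max_sub_add_algebraMap (isSelfAdjoint_inr.2 hq) η
    _ = _ := by rw [two_mul, map_add, add_assoc]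

lemma isOpen_setOf_exists_cuntzLE_cutdown {X : Type*} [TopologicalSpace X] {f : X → A}
    (hf : Continuous f) (hfsa : ∀ x, IsSelfAdjoint (f x)) (b : A) :
    IsOpen {x | ∃ ε > 0, CuntzLE b (cutdown ε (f x))} := by
  refine isOpen_iff_mem_nhds.2 fun x₀ ⟨ε, hε, hb⟩ => ?_
  filter_upwards [hf.continuousAt.preimage_mem_nhds
    (Metric.closedBall_mem_nhds (f x₀) (half_pos hε))] with x hx
  have := cutdown_cuntzLE_cutdown_of_norm_sub_le (hfsa x₀) (hfsa x) (half_pos hε).le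
    (by rwa [← dist_eq_norm, dist_comm])
  rw [mul_div_cancel₀ _ two_ne_zero] at this
  exact ⟨ε / 2, half_pos hε, hb.trans this⟩

end NonUnitalOrdered

theorem stmt_3_general {X : Type*} [TopologicalSpace X]
    {A : Type*} [NonUnitalCStarAlgebra A] [PartialOrder A] [StarOrderedRing A]
    (a : C₀(X, A)) (ha : ∀ x, 0 ≤ a x) (b : A) :
    IsOpen {x : X | (∃ ε > (0 : ℝ), CuntzLE b (cutdown ε (a x))) ∧ ¬ CuntzLE (a x) b} :=
  (isOpen_setOf_exists_cuntzLE_cutdown (map_continuous a) (fun x => .of_nonneg (ha x)) b).inter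
    ((isClosed_setOf_cuntzLE b).isOpen_compl.preimage (map_continuous a))

/-- For a positive `a ∈ C₀(X, A)` and positive `b ∈ A`, the set
`{x : [b] ≪ [a(x)] and [b] ≠ [a(x)]}`, i.e. those `x` for which `b ≼ (a(x) - ε)₊` for some
`ε > 0` and `a(x)` is not Cuntz subequivalent to `b`, is open. -/
theorem stmt_3 {X : Type*} [TopologicalSpace X] [LocallyCompactSpace X] [T2Space X]
    {A : Type*} [NonUnitalCStarAlgebra A] [PartialOrder A] [StarOrderedRing A]
    (a : C₀(X, A)) (ha : ∀ x, 0 ≤ a x) (b : A) (hb : 0 ≤ b) :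
    IsOpen {x : X | (∃ ε > (0 : ℝ), CuntzLE b (cutdown ε (a x))) ∧ ¬ CuntzLE (a x) b} :=
  stmt_3_general a ha b
end

section
/- Let X be a second countable, locally compact Hausdorff space, Y ⊆ X a closed subset, and A a C*-algebra. Let p : Y → A be a continuous function such that p(x) is a projection for all x ∈ Y and p(x) ~ p(y) (Murray–von Neumann) for all x, y ∈ Y. Then there exist an open set U with Y ⊆ U ⊆ X and a continuous function p̃ : U → A such that p̃(x) = p(x) for all x ∈ Y, p̃(x) is a projection for all x ∈ U, and p̃(x) ~ p̃(y) for all x, y ∈ U. -/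
/-- A projection in a C*-algebra: a self-adjoint idempotent. -/
def IsProjectionElem {A : Type*} [Mul A] [Star A] (e : A) : Prop :=
  star e = e ∧ e * e = e

/-- Murray–von Neumann equivalence of projections. -/
def MvNEquiv {A : Type*} [Mul A] [Star A] (e f : A) : Prop :=
  ∃ v, star v * v = e ∧ v * star v = f

/-! Since `X` is metrizable, Dugundji's method extends `p` to a continuous `q : X → A`: off `Y`,
a partition of unity makes `q x` a convex combination of values `p y` with `d(x, y) < 2 d(x, Y)`,
which forces continuity along `Y` and keeps `q` self-adjoint. Where `q x` lies within `1/20` of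
some `p y`, the element `q x² - q x` is small, so the spectrum of `q x` avoids `[1/4, 3/4]` and the
functional calculus with a continuous function that is `0` below `1/4` and `1` above `3/4` turns
`q` into a continuous family of projections, each at distance `< 1` from some `p y`. Projections
at distance `< 1` are Murray–von Neumann equivalent, via the polar part of
`f e + (1 - f)(1 - e)`, and equivalence of projections is transitive. -/

open CFC Metric Set Topology

lemma isProjectionElem_iff_isStarProjection {A : Type*} [Mul A] [Star A] {e : A} :
    IsProjectionElem e ↔ IsStarProjection e := by
  rw [isStarProjection_iff', IsProjectionElem, and_comm]

section MurrayVonNeumann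

lemma MvNEquiv.symm {A : Type*} [Mul A] [InvolutiveStar A] {e f : A} (h : MvNEquiv e f) :
    MvNEquiv f e := by
  obtain ⟨v, hv₁, hv₂⟩ := h
  exact ⟨star v, by rwa [star_star], by rwa [star_star]⟩

lemma MvNEquiv.trans {A : Type*} [Semigroup A] [StarMul A] {e f g : A} (he : IsIdempotentElem e)
    (hg : IsIdempotentElem g) (h₁ : MvNEquiv e f) (h₂ : MvNEquiv f g) : MvNEquiv e g := by
  obtain ⟨u, hu₁, hu₂⟩ := h₁
  obtain ⟨v, hv₁, hv₂⟩ := h₂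
  refine ⟨v * u, ?_, ?_⟩
  · calc star (v * u) * (v * u) = star u * ((star v * v) * u) := by
          simp only [star_mul, mul_assoc]
      _ = (star u * u) * (star u * u) := by rw [hv₁, ← hu₂]; simp only [mul_assoc]
      _ = e := by rw [hu₁, he.eq]
  · calc v * u * star (v * u) = v * ((u * star u) * star v) := by
          simp only [star_mul, mul_assoc]
      _ = (v * star v) * (v * star v) := by rw [hu₂, ← hv₁]; simp only [mul_assoc]
      _ = g := by rw [hv₂, hg.eq]

lemma IsIdempotentElem.mul_add_one_sub_mul_eq {R : Type*} [Ring R] {e f : R}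
    (he : IsIdempotentElem e) (hf : IsIdempotentElem f) :
    (e * f + (1 - e) * (1 - f)) * (f * e + (1 - f) * (1 - e)) = 1 - (e - f) ^ 2 := by
  have hf' : ∀ x : R, f * (f * x) = f * x := fun x => by rw [← mul_assoc, hf.eq]
  simp only [mul_sub, sub_mul, mul_add, add_mul, mul_one, one_mul, mul_assoc, he.eq, hf.eq, hf',
    pow_two]
  abel

lemma IsStarProjection.mvnEquiv_of_intertwiner {B : Type*} [CStarAlgebra B] [PartialOrder B]
    [StarOrderedRing B] {e f z : B} (he : IsStarProjection e) (hf : IsSelfAdjoint f)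
    (hz_normal : z * star z = star z * z) (hz_pos : IsStrictlyPositive (star z * z))
    (hze : z * e = f * z) : MvNEquiv e f := by
  set w := star z * z
  have hez : e * star z = star z * f := by
    simpa [star_mul, he.isSelfAdjoint.star_eq, hf.star_eq] using congrArg star hze
  have hew : Commute e w := by
    show e * (star z * z) = star z * z * e
    rw [← mul_assoc, hez, mul_assoc, ← hze, mul_assoc]
  have hzw : Commute z w := by
    show z * (star z * z) = star z * z * z
    rw [← mul_assoc, hz_normal]
  set r := w ^ (-(1 / 2) : ℝ)
  have her : Commute e r := (hew.symm.cfc_nnreal _).symm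
  have hzw_inv : Commute z (w ^ (-1 : ℝ)) := (hzw.symm.cfc_nnreal _).symm
  have hrr : r * r = w ^ (-1 : ℝ) := by
    rw [← rpow_add hz_pos.isUnit]
    norm_num
  have hr_star : star r = r := rpow_nonneg.isSelfAdjoint.star_eq
  refine ⟨z * r * e, ?_, ?_⟩
  · calc star (z * r * e) * (z * r * e) = e * (r * w * r) * e := by
          simp only [star_mul, he.isSelfAdjoint.star_eq, hr_star, w, mul_assoc]
      _ = e := by rw [conjugate_rpow_neg_one_half w, mul_one, he.isIdempotentElem.eq]
  · calc z * r * e * star (z * r * e) = z * e * (r * r) * star z := by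
          simp only [star_mul, he.isSelfAdjoint.star_eq, hr_star, mul_assoc]
          rw [← mul_assoc e e, he.isIdempotentElem.eq, ← mul_assoc r e, ← her.eq, mul_assoc]
      _ = f * (w ^ (-1 : ℝ) * (z * star z)) := by
          rw [hze, hrr, mul_assoc, mul_assoc, ← mul_assoc z, hzw_inv.eq, mul_assoc]
      _ = f := by
          rw [hz_normal]
          nth_rw 2 [← rpow_one w hz_pos.nonneg]
          rw [rpow_neg_mul_rpow 1 hz_pos, mul_one]

lemma IsStarProjection.mvnEquiv_of_norm_sub_lt_one' {B : Type*} [CStarAlgebra B] [PartialOrder B]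
    [StarOrderedRing B] {e f : B} (he : IsStarProjection e) (hf : IsStarProjection f)
    (hef : ‖e - f‖ < 1) : MvNEquiv e f := by
  set z := f * e + (1 - f) * (1 - e)
  have hz_star : star z = e * f + (1 - e) * (1 - f) := by
    simp [z, star_mul, he.isSelfAdjoint.star_eq, hf.isSelfAdjoint.star_eq]
  have hw : star z * z = 1 - (e - f) ^ 2 := by
    rw [hz_star, he.isIdempotentElem.mul_add_one_sub_mul_eq hf.isIdempotentElem]
  have hz_normal : z * star z = star z * z := by
    rw [hw, hz_star, hf.isIdempotentElem.mul_add_one_sub_mul_eq he.isIdempotentElem,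
      ← neg_sub e f, neg_sq]
  have hz_pos : IsStrictlyPositive (star z * z) := by
    refine ⟨star_mul_self_nonneg z, hw ▸ isUnit_one_sub_of_norm_lt_one ?_⟩
    calc ‖(e - f) ^ 2‖ ≤ ‖e - f‖ * ‖e - f‖ := pow_two (e - f) ▸ norm_mul_le _ _
      _ < 1 := by nlinarith [norm_nonneg (e - f)]
  have hze : z * e = f * z := by
    have h₁ : z * e = f * e := by
      rw [add_mul, mul_assoc, he.isIdempotentElem.eq, mul_assoc, he.one_sub_mul_self, mul_zero,
        add_zero]
    have h₂ : f * z = f * e := by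
      rw [mul_add, ← mul_assoc, hf.isIdempotentElem.eq, ← mul_assoc, hf.mul_one_sub_self,
        zero_mul, add_zero]
    rw [h₁, h₂]
  exact he.mvnEquiv_of_intertwiner hf.isSelfAdjoint hz_normal hz_pos hze

lemma MvNEquiv.of_inr {A : Type*} [NonUnitalCStarAlgebra A] {e f : A}
    (h : MvNEquiv (e : Unitization ℂ A) (f : Unitization ℂ A)) : MvNEquiv e f := by
  obtain ⟨v, hv₁, hv₂⟩ := h
  have hv : v = (v.snd : Unitization ℂ A) := by
    have : star v.fst * v.fst = 0 := by
      simpa using congrArg (·.fst) hv₁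
    rw [← Unitization.inl_fst_add_inr_snd_eq v, (CStarRing.star_mul_self_eq_zero_iff _).mp this,
      Unitization.inl_zero, zero_add, Unitization.snd_inr]
  rw [hv, ← Unitization.inr_star, ← Unitization.inr_mul] at hv₁ hv₂
  exact ⟨v.snd, Unitization.inr_injective hv₁, Unitization.inr_injective hv₂⟩

lemma IsStarProjection.mvnEquiv_of_norm_sub_lt_one {A : Type*} [NonUnitalCStarAlgebra A]
    {e f : A} (he : IsStarProjection e) (hf : IsStarProjection f) (hef : ‖e - f‖ < 1) :
    MvNEquiv e f := by
  refine MvNEquiv.of_inr (he.inr.mvnEquiv_of_norm_sub_lt_one' hf.inr ?_)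
  rwa [← Unitization.inr_sub, Unitization.norm_inr]

end MurrayVonNeumann

section ProjFun

noncomputable def projFun (t : ℝ) : ℝ := min 1 (max 0 (2 * t - 2⁻¹))

@[simp]
lemma projFun_zero : projFun 0 = 0 := by norm_num [projFun]

@[fun_prop]
lemma continuous_projFun : Continuous projFun := by
  unfold projFun; fun_prop

lemma projFun_of_abs_mul_self_sub_lt {t : ℝ} (h : |t * t - t| < 3 / 16) :
    projFun t = 0 ∧ t < 1 / 4 ∨ projFun t = 1 ∧ 3 / 4 < t := by
  obtain ⟨h₁, h₂⟩ := abs_lt.mp h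
  rcases lt_or_ge t (1 / 4) with ht | ht
  · left
    refine ⟨?_, ht⟩
    rw [projFun, max_eq_left (by linarith), min_eq_right zero_le_one]
  · have ht' : 3 / 4 < t := by nlinarith
    right
    refine ⟨?_, ht'⟩
    rw [projFun, max_eq_right (by linarith), min_eq_left (by linarith)]

lemma abs_projFun_sub_le {t : ℝ} (h : |t * t - t| < 3 / 16) : |projFun t - t| ≤ 1 / 4 := by
  obtain ⟨h₁, h₂⟩ := abs_lt.mp h
  rw [abs_le]
  rcases projFun_of_abs_mul_self_sub_lt h with ⟨hp, ht⟩ | ⟨hp, ht⟩ <;>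
    rw [hp] <;> constructor <;> nlinarith

variable {A : Type*} [NonUnitalCStarAlgebra A] {a e : A}

lemma IsSelfAdjoint.abs_mul_self_sub_le (ha : IsSelfAdjoint a) {t : ℝ}
    (ht : t ∈ quasispectrum ℝ a) : |t * t - t| ≤ ‖a * a - a‖ := by
  have h := norm_apply_le_norm_cfcₙ (fun s : ℝ => s * s - s) a ht
  rwa [cfcₙ_sub _ _ a, cfcₙ_mul _ _ a, cfcₙ_id' ℝ a, Real.norm_eq_abs] at h

lemma IsSelfAdjoint.isStarProjection_cfcₙ_projFun (ha : IsSelfAdjoint a)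
    (h : ‖a * a - a‖ < 3 / 16) : IsStarProjection (cfcₙ projFun a) := by
  refine ⟨?_, cfcₙ_predicate projFun a⟩
  rw [IsIdempotentElem, ← cfcₙ_mul _ _ a]
  refine cfcₙ_congr fun t ht => ?_
  rcases projFun_of_abs_mul_self_sub_lt ((ha.abs_mul_self_sub_le ht).trans_lt h)
    with ⟨hp, -⟩ | ⟨hp, -⟩ <;> simp [hp]

lemma IsSelfAdjoint.norm_cfcₙ_projFun_sub_le (ha : IsSelfAdjoint a)
    (h : ‖a * a - a‖ < 3 / 16) : ‖cfcₙ projFun a - a‖ ≤ 1 / 4 := by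
  nth_rw 2 [← cfcₙ_id' ℝ a]
  rw [← cfcₙ_sub _ _ a]
  refine norm_cfcₙ_le fun t ht => ?_
  exact abs_projFun_sub_le ((ha.abs_mul_self_sub_le ht).trans_lt h)

lemma IsStarProjection.cfcₙ_projFun (he : IsStarProjection e) : cfcₙ projFun e = e := by
  nth_rw 2 [← cfcₙ_id' ℝ e]
  refine cfcₙ_congr fun t ht => ?_
  rcases he.isIdempotentElem.quasispectrum_subset ℝ ht with rfl | rfl <;> norm_num [projFun]

lemma IsStarProjection.norm_mul_self_sub_self_lt (he : IsStarProjection e)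
    (h : ‖a - e‖ < 20⁻¹) : ‖a * a - a‖ < 3 / 16 := by
  set d := a - e
  have hd : a * a - a = e * d + d * e + d * d - d := by
    simp only [d, mul_sub, sub_mul, he.isIdempotentElem.eq]; abel
  rw [hd]
  have := norm_sub_le (e * d + d * e + d * d) d
  have := norm_add₃_le (a := e * d) (b := d * e) (c := d * d)
  have := norm_mul_le e d
  have := norm_mul_le d e
  have := norm_mul_le d d
  nlinarith [he.norm_le, norm_nonneg d]

lemma IsStarProjection.cfcₙ_projFun_of_norm_sub_lt (he : IsStarProjection e)
    (ha : IsSelfAdjoint a) (h : ‖a - e‖ < 20⁻¹) :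
    IsStarProjection (cfcₙ projFun a) ∧ MvNEquiv (cfcₙ projFun a) e := by
  have hnear := he.norm_mul_self_sub_self_lt h
  have hp := ha.isStarProjection_cfcₙ_projFun hnear
  refine ⟨hp, hp.mvnEquiv_of_norm_sub_lt_one he ?_⟩
  calc ‖cfcₙ projFun a - e‖ ≤ ‖cfcₙ projFun a - a‖ + ‖a - e‖ :=
        norm_sub_le_norm_sub_add_norm_sub _ _ _
    _ < 1 := by linarith [ha.norm_cfcₙ_projFun_sub_le hnear]

end ProjFun

section Extension
variable {X E : Type*} [MetricSpace X] [NormedAddCommGroup E] [NormedSpace ℝ E] {Y : Set X}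

lemma exists_continuousOn_compl_mem_convexHull (hY : IsClosed Y) (hne : Y.Nonempty) (p : Y → E) :
    ∃ g : X → E, ContinuousOn g Yᶜ ∧
      ∀ x ∉ Y, g x ∈ convexHull ℝ (p '' {y | dist x y < 2 * infDist x Y}) := by
  obtain ⟨G, hG⟩ := exists_continuous_forall_mem_convex_of_local_const
    (t := fun z : ↥Yᶜ => convexHull ℝ (p '' {y | dist (z : X) y < 2 * infDist (z : X) Y}))
    (fun _ => convex_convexHull ℝ _) fun z => by
      obtain ⟨y, hy, hzy⟩ := (infDist_lt_iff hne).mp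
        (lt_two_mul_self ((hY.notMem_iff_infDist_pos hne).mp z.2))
      have hopen : IsOpen {z' : ↥Yᶜ | dist (z' : X) y < 2 * infDist (z' : X) Y} :=
        isOpen_lt (continuous_subtype_val.dist continuous_const)
          (continuous_const.mul ((continuous_infDist_pt Y).comp continuous_subtype_val))
      exact ⟨p ⟨y, hy⟩, Filter.mem_of_superset (hopen.mem_nhds hzy)
        fun z' hz' => subset_convexHull ℝ _ ⟨⟨y, hy⟩, hz', rfl⟩⟩
  classical
  refine ⟨fun x => if hx : x ∈ Yᶜ then G ⟨x, hx⟩ else 0, ?_, fun x hx => ?_⟩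
  · rw [continuousOn_iff_continuous_domRestrict]
    convert G.continuous using 1
    exact funext fun z => dif_pos z.2
  · simpa [hx] using hG ⟨x, hx⟩

lemma convexHull_image_subset_ball {p : Y → E} {y₀ : Y} {δ ε : ℝ}
    (hp : ∀ ⦃y : Y⦄, dist y y₀ < δ → dist (p y) (p y₀) < ε) {x : X} (hx : dist x y₀ < δ / 3) :
    convexHull ℝ (p '' {y | dist x y < 2 * infDist x Y}) ⊆ ball (p y₀) ε := by
  refine convexHull_min ?_ (convex_ball _ _)
  rintro _ ⟨y, hy, rfl⟩
  refine mem_ball.mpr (@hp y ?_)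
  have := infDist_le_dist_of_mem (x := x) y₀.2
  calc dist y y₀ = dist (y : X) y₀ := rfl
    _ ≤ dist x y + dist x y₀ := dist_triangle_left _ _ _
    _ < δ := by linarith [show dist x y < 2 * infDist x Y from hy]

theorem exists_continuous_extension_mem_convexHull (hY : IsClosed Y) (hne : Y.Nonempty)
    (p : Y → E) (hp : Continuous p) :
    ∃ q : X → E, Continuous q ∧ (∀ y : Y, q y = p y) ∧ ∀ x, q x ∈ convexHull ℝ (range p) := by
  classical
  obtain ⟨g, hg, hg_mem⟩ := exists_continuousOn_compl_mem_convexHull hY hne p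
  set q : X → E := fun x => if hx : x ∈ Y then p ⟨x, hx⟩ else g x
  refine ⟨q, continuous_iff_continuousAt.mpr fun x₀ => ?_, fun y => dif_pos y.2, fun x => ?_⟩
  · by_cases hx₀ : x₀ ∈ Y
    · refine Metric.continuousAt_iff.mpr fun ε hε => ?_
      obtain ⟨δ, hδ, hpδ⟩ := Metric.continuousAt_iff.mp (hp.continuousAt (x := ⟨x₀, hx₀⟩)) ε hε
      refine ⟨δ / 3, by positivity, fun {x} hx => ?_⟩
      simp only [q, dif_pos hx₀]
      split_ifs with hxY
      · exact hpδ (x := ⟨x, hxY⟩) (by change dist x x₀ < δ; linarith)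
      · exact convexHull_image_subset_ball (y₀ := ⟨x₀, hx₀⟩) hpδ hx (hg_mem x hxY)
    · have : q =ᶠ[𝓝 x₀] g := Filter.mem_of_superset (hY.isOpen_compl.mem_nhds hx₀)
        fun x hx => dif_neg hx
      exact (hg.continuousAt (hY.isOpen_compl.mem_nhds hx₀)).congr this.symm
  · by_cases hx : x ∈ Y
    · simpa [q, hx] using subset_convexHull ℝ _ (mem_range_self (⟨x, hx⟩ : Y))
    · simpa [q, hx] using convexHull_mono (image_subset_range _ _) (hg_mem x hx)

end Extension

/-- A continuous projection-valued function on a closed subset `Y ⊆ X`, all of whose values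
are mutually Murray–von Neumann equivalent, extends to a continuous projection-valued
function on an open set `U ⊇ Y`, all of whose values are mutually Murray–von Neumann
equivalent. -/
theorem stmt_10 {X : Type*} [TopologicalSpace X] [SecondCountableTopology X]
    [LocallyCompactSpace X] [T2Space X]
    {A : Type*} [NonUnitalCStarAlgebra A]
    (Y : Set X) (hY : IsClosed Y)
    (p : Y → A) (hp : Continuous p)
    (hproj : ∀ x : Y, IsProjectionElem (p x))
    (hMvN : ∀ x y : Y, MvNEquiv (p x) (p y)) :
    ∃ (U : Set X) (_ : IsOpen U) (hYU : Y ⊆ U) (pt : U → A),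
      Continuous pt ∧
      (∀ (x : X) (hx : x ∈ Y), pt ⟨x, hYU hx⟩ = p ⟨x, hx⟩) ∧
      (∀ x : U, IsProjectionElem (pt x)) ∧
      (∀ x y : U, MvNEquiv (pt x) (pt y)) := by
  rcases Y.eq_empty_or_nonempty with rfl | hne
  · exact ⟨∅, isOpen_empty, subset_rfl, fun _ => 0, continuous_const, fun _ hx => hx.elim,
      fun x => x.2.elim, fun x => x.2.elim⟩
  let _ : MetricSpace X := TopologicalSpace.metrizableSpaceMetric X
  simp only [isProjectionElem_iff_isStarProjection] at hproj ⊢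
  obtain ⟨q, hq, hqY, hq_hull⟩ := exists_continuous_extension_mem_convexHull hY hne p hp
  have hq_sa : ∀ x, IsSelfAdjoint (q x) := fun x =>
    convexHull_min (range_subset_iff.mpr fun y => (hproj y).isSelfAdjoint)
      (selfAdjoint.submodule ℝ A).convex (hq_hull x)
  obtain ⟨y₀, hy₀⟩ := hne
  have hU : ∀ x ∈ q ⁻¹' thickening 20⁻¹ (range p),
      IsStarProjection (cfcₙ projFun (q x)) ∧ MvNEquiv (cfcₙ projFun (q x)) (p ⟨y₀, hy₀⟩) := by
    rintro x hx
    obtain ⟨_, ⟨y, rfl⟩, hxy⟩ := mem_thickening_iff.mp hx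
    obtain ⟨hproj_x, hx_y⟩ :=
      (hproj y).cfcₙ_projFun_of_norm_sub_lt (hq_sa x) (dist_eq_norm (q x) (p y) ▸ hxy)
    exact ⟨hproj_x, hx_y.trans hproj_x.isIdempotentElem (hproj _).isIdempotentElem (hMvN _ _)⟩
  refine ⟨q ⁻¹' thickening 20⁻¹ (range p), isOpen_thickening.preimage hq,
    fun x hx => self_subset_thickening (δ := 20⁻¹) (by norm_num) _ ⟨⟨x, hx⟩, (hqY _).symm⟩,
    fun x => cfcₙ projFun (q x), ?_, fun x hx => ?_, fun x => (hU x x.2).1, fun x y => ?_⟩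
  · exact Continuous.cfcₙ_of_mem_nhdsSet _ Filter.univ_mem (hq.comp continuous_subtype_val)
      (hf := continuous_projFun.continuousOn)
  · show cfcₙ projFun (q x) = _
    rw [hqY ⟨x, hx⟩, (hproj _).cfcₙ_projFun]
  · exact (hU x x.2).2.trans (hU x x.2).1.isIdempotentElem (hU y y.2).1.isIdempotentElem
      (hU y y.2).2.symm
end
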